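/- (CDR with an exact reward model has no larger variance than CIPS.) Define the single-sample CIPS value f_CIPS(x,A,ω) := ∑_{a∈𝒜} w(x,a)·C(ω,a)·R(ω,a) and the single-sample CDR value with the exact reward model f_CDR(x,A,ω) := ∑_{a∈𝒜} [ w(x,a)·( C(ω,a)·R(ω,a) − p_c(x,a,A)·q_r(x,a) ) + p_c(x,a,π)·q_r(x,a) ], where w(x,a) := p_c(x,a,π)/p_c(x,a,π₀) with the convention t/0 := 0. Under the independence of potential rewards condition, the click–reward factorization condition, the click-wise common support condition, and conditional uncorrelatedness across actions, Var_{x∼p, A∼π₀(x), ω∼κ(x,A)}[f_CDR] ≤ Var_{x∼p, A∼π₀(x), ω∼κ(x,A)}[f_CIPS]. -/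

import Mathlib

open scoped BigOperators Classical

/-- Expectation of a real-valued function under a PMF on a finite type. -/
noncomputable def pexp {X : Type*} [Fintype X] (p : PMF X) (f : X → ℝ) : ℝ :=
  ∑ x, (p x).toReal * f x

/-- Variance of a real-valued function under a PMF on a finite type. -/
noncomputable def pvar {X : Type*} [Fintype X] (p : PMF X) (f : X → ℝ) : ℝ :=
  pexp p (fun x => (f x - pexp p f) ^ 2)

/-- Joint distribution of one logged sample (x, A, ω) with x ∼ p, A ∼ π₀(x), ω ∼ κ(x,A). -/
noncomputable def logged {𝒳 ℛ Ω : Type*} (p : PMF 𝒳) (π₀ : 𝒳 → PMF ℛ)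
    (κ : 𝒳 → ℛ → PMF Ω) : PMF (𝒳 × ℛ × Ω) :=
  p.bind fun x => (π₀ x).bind fun A => (κ x A).map fun ω => (x, A, ω)

/-- Click probability of action a at context x given ranking A: p_c(x,a,A). -/
noncomputable def pcA {𝒳 ℛ Ω 𝒜 : Type*} [Fintype Ω]
    (κ : 𝒳 → ℛ → PMF Ω) (C : Ω → 𝒜 → ℝ) (x : 𝒳) (a : 𝒜) (A : ℛ) : ℝ :=
  pexp (κ x A) fun ω => C ω a

/-- Marginalized click probability of action a at context x under policy μ: p_c(x,a,μ). -/
noncomputable def pcPol {𝒳 ℛ Ω 𝒜 : Type*} [Fintype Ω] [Fintype ℛ]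
    (κ : 𝒳 → ℛ → PMF Ω) (C : Ω → 𝒜 → ℝ) (μ : 𝒳 → PMF ℛ) (x : 𝒳) (a : 𝒜) : ℝ :=
  pexp (μ x) fun A => pcA κ C x a A

/-- Policy value V(π). -/
noncomputable def polValue {𝒳 ℛ Ω 𝒜 : Type*} [Fintype 𝒳] [Fintype ℛ] [Fintype Ω] [Fintype 𝒜]
    (p : PMF 𝒳) (π : 𝒳 → PMF ℛ) (κ : 𝒳 → ℛ → PMF Ω) (C R : Ω → 𝒜 → ℝ) : ℝ :=
  pexp p fun x => pexp (π x) fun A => pexp (κ x A) fun ω => ∑ a, C ω a * R ω a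

section helpers
variable {X Y : Type*} [Fintype X] [Fintype Y]

lemma sum_pmf (p : PMF X) : ∑ x, (p x).toReal = 1 := by
  rw [← ENNReal.toReal_sum (fun x _ => p.apply_ne_top x)]
  rw [← tsum_fintype (L := .unconditional _), p.tsum_coe, ENNReal.toReal_one]
lemma pexp_const (p : PMF X) (c : ℝ) : pexp p (fun _ => c) = c := by
  simp [pexp, ← Finset.sum_mul, sum_pmf]
lemma pexp_add (p : PMF X) (f g : X → ℝ) :
    pexp p (fun x => f x + g x) = pexp p f + pexp p g := by
  simp [pexp, mul_add, Finset.sum_add_distrib]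
lemma pexp_sub (p : PMF X) (f g : X → ℝ) :
    pexp p (fun x => f x - g x) = pexp p f - pexp p g := by
  simp [pexp, mul_sub, Finset.sum_sub_distrib]
lemma pexp_const_mul (p : PMF X) (c : ℝ) (f : X → ℝ) :
    pexp p (fun x => c * f x) = c * pexp p f := by
  simp [pexp, Finset.mul_sum]; congr 1; ext x; ring
lemma pexp_nonneg (p : PMF X) {f : X → ℝ} (hf : ∀ x, 0 ≤ f x) : 0 ≤ pexp p f :=
  Finset.sum_nonneg fun x _ => mul_nonneg ENNReal.toReal_nonneg (hf x)
lemma pexp_finset_sum {ι : Type*} (p : PMF X) (s : Finset ι) (F : ι → X → ℝ) :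
    pexp p (fun x => ∑ a ∈ s, F a x) = ∑ a ∈ s, pexp p (F a) := by
  simp [pexp, Finset.mul_sum]
  exact Finset.sum_comm
lemma pexp_sq_le (p : PMF X) (f : X → ℝ) : (pexp p f)^2 ≤ pexp p (fun x => f x ^ 2) := by
  have h0 : 0 ≤ pexp p (fun x => (f x - pexp p f) ^ 2) :=
    pexp_nonneg p fun x => sq_nonneg _
  have hexp : pexp p (fun x => (f x - pexp p f) ^ 2)
      = pexp p (fun x => f x ^ 2) - (pexp p f)^2 := by
    have : ∀ x, (f x - pexp p f) ^ 2
        = f x ^ 2 + ((-(2 * pexp p f)) * f x + (pexp p f)^2) := by intro x; ring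
    simp only [this, pexp_add, pexp_const_mul, pexp_const]
    ring
  linarith [hexp ▸ h0]
lemma pexp_map (q : PMF X) (g : X → Y) (F : Y → ℝ) :
    pexp (q.map g) F = pexp q (fun x => F (g x)) := by
  simp only [pexp, PMF.map_apply, tsum_fintype]
  have : ∀ y, ((∑ x, if y = g x then q x else 0)).toReal
      = ∑ x, (if y = g x then (q x).toReal else 0) := by
    intro y
    rw [ENNReal.toReal_sum (fun x _ => by split <;> simp [q.apply_ne_top x])]
    congr 1; ext x; split <;> simp
  simp only [this, Finset.sum_mul]
  rw [Finset.sum_comm]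
  congr 1; ext x
  simp [Finset.sum_ite_eq]
lemma pexp_bind (p : PMF X) (f : X → PMF Y) (F : Y → ℝ) :
    pexp (p.bind f) F = pexp p (fun x => pexp (f x) F) := by
  simp only [pexp, PMF.bind_apply, tsum_fintype]
  have : ∀ y, ((∑ x, p x * f x y)).toReal = ∑ x, (p x).toReal * (f x y).toReal := by
    intro y
    rw [ENNReal.toReal_sum (fun x _ => ENNReal.mul_ne_top (p.apply_ne_top x) ((f x).apply_ne_top y))]
    simp [ENNReal.toReal_mul]
  simp only [this, Finset.sum_mul, Finset.mul_sum]
  rw [Finset.sum_comm]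
  congr 1; ext x; congr 1; ext y; ring
end helpers

lemma pexp_logged {𝒳 ℛ Ω : Type*} [Fintype 𝒳] [Fintype ℛ] [Fintype Ω]
    (p : PMF 𝒳) (π₀ : 𝒳 → PMF ℛ) (κ : 𝒳 → ℛ → PMF Ω) (F : 𝒳 × ℛ × Ω → ℝ) :
    pexp (logged p π₀ κ) F
      = pexp p (fun x => pexp (π₀ x) (fun A => pexp (κ x A) (fun ω => F (x, A, ω)))) := by
  unfold logged
  rw [pexp_bind]
  congr 1; ext x
  rw [pexp_bind]
  congr 1; ext A
  rw [pexp_map]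

/-- CDR with the exact reward model has no larger variance than CIPS. -/
theorem CDR_variance_le_CIPS {𝒳 ℛ Ω 𝒜 : Type*}
    [Fintype 𝒳] [Nonempty 𝒳] [Fintype ℛ] [Nonempty ℛ] [Fintype Ω] [Nonempty Ω] [Fintype 𝒜]
    (p : PMF 𝒳) (π π₀ : 𝒳 → PMF ℛ) (κ : 𝒳 → ℛ → PMF Ω)
    (C R : Ω → 𝒜 → ℝ) (hC : ∀ ω a, C ω a = 0 ∨ C ω a = 1)
    (q_r : 𝒳 → 𝒜 → ℝ)
    (hind : ∀ x a A, pexp (κ x A) (fun ω => R ω a) = q_r x a)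
    (hfact : ∀ x a A,
      pexp (κ x A) (fun ω => C ω a * R ω a) = pcA κ C x a A * q_r x a)
    (hsupp : ∀ x a, 0 < pcPol κ C π x a → 0 < pcPol κ C π₀ x a)
    (huncorr : ∀ x A a a', a ≠ a' →
      pexp (κ x A) (fun ω => (C ω a * R ω a) * (C ω a' * R ω a'))
        = pexp (κ x A) (fun ω => C ω a * R ω a) *
          pexp (κ x A) (fun ω => C ω a' * R ω a')) :
    pvar (logged p π₀ κ)
        (fun s => ∑ a,
          ((pcPol κ C π s.1 a / pcPol κ C π₀ s.1 a) *
              (C s.2.2 a * R s.2.2 a - pcA κ C s.1 a s.2.1 * q_r s.1 a)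
            + pcPol κ C π s.1 a * q_r s.1 a))
    ≤ pvar (logged p π₀ κ)
        (fun s => ∑ a, (pcPol κ C π s.1 a / pcPol κ C π₀ s.1 a) *
          C s.2.2 a * R s.2.2 a) := by
  classical
  set w : 𝒳 → 𝒜 → ℝ := fun x a => pcPol κ C π x a / pcPol κ C π₀ x a with hw_def
  set t : 𝒳 → ℛ → ℝ := fun x A => ∑ a, w x a * (pcA κ C x a A * q_r x a) with ht_def
  set m : 𝒳 → ℝ := fun x => ∑ a, pcPol κ C π x a * q_r x a with hm_def
  set G : 𝒳 × ℛ × Ω → ℝ := fun s => ∑ a, (pcPol κ C π s.1 a / pcPol κ C π₀ s.1 a) *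
          C s.2.2 a * R s.2.2 a with hG_def
  set F : 𝒳 × ℛ × Ω → ℝ := fun s => ∑ a,
          ((pcPol κ C π s.1 a / pcPol κ C π₀ s.1 a) *
              (C s.2.2 a * R s.2.2 a - pcA κ C s.1 a s.2.1 * q_r s.1 a)
            + pcPol κ C π s.1 a * q_r s.1 a) with hF_def
  set μ : PMF (𝒳 × ℛ × Ω) := logged p π₀ κ with hμ_def
  -- nonnegativity of click probabilities
  have hCnn : ∀ ω a, 0 ≤ C ω a := by
    intro ω a; rcases hC ω a with h | h <;> simp [h]
  have hpcA_nn : ∀ x a A, 0 ≤ pcA κ C x a A := fun x a A =>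
    pexp_nonneg _ fun ω => hCnn ω a
  have hpcPol_nn : ∀ (ν : 𝒳 → PMF ℛ) x a, 0 ≤ pcPol κ C ν x a := fun ν x a =>
    pexp_nonneg _ fun A => hpcA_nn x a A
  have hw : ∀ x a, w x a * pcPol κ C π₀ x a = pcPol κ C π x a := by
    intro x a
    by_cases h : pcPol κ C π₀ x a = 0
    · have hπ : pcPol κ C π x a = 0 := by
        by_contra hne
        have hpos : 0 < pcPol κ C π x a := lt_of_le_of_ne (hpcPol_nn π x a) (Ne.symm hne)
        exact absurd (hsupp x a hpos) (by simp [h])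
      simp [hw_def, h, hπ]
    · simp [hw_def, div_mul_cancel₀ _ h]
  -- conditional expectation of G
  have htG : ∀ x A, pexp (κ x A) (fun ω => G (x, A, ω)) = t x A := by
    intro x A
    rw [show (fun ω => G (x, A, ω)) = fun ω => ∑ a, w x a * (C ω a * R ω a) from by
      funext ω; simp only [hG_def, hw_def]; exact Finset.sum_congr rfl fun a _ => by ring]
    rw [pexp_finset_sum]
    exact Finset.sum_congr rfl fun a _ => by rw [pexp_const_mul, hfact]
  -- conditional expectation of F
  have htF : ∀ x A, pexp (κ x A) (fun ω => F (x, A, ω)) = m x := by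
    intro x A
    simp only [hF_def]
    rw [pexp_finset_sum]
    refine Finset.sum_congr rfl fun a _ => ?_
    have : (fun ω => pcPol κ C π x a / pcPol κ C π₀ x a *
        (C ω a * R ω a - pcA κ C x a A * q_r x a) + pcPol κ C π x a * q_r x a)
        = fun ω => (pcPol κ C π x a / pcPol κ C π₀ x a) *
          ((C ω a * R ω a) - pcA κ C x a A * q_r x a) + pcPol κ C π x a * q_r x a := rfl
    rw [this]
    rw [show (fun ω : Ω => (pcPol κ C π x a / pcPol κ C π₀ x a) *
          ((C ω a * R ω a) - pcA κ C x a A * q_r x a) + pcPol κ C π x a * q_r x a)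
        = (fun ω : Ω => ((pcPol κ C π x a / pcPol κ C π₀ x a) *
          ((C ω a * R ω a) - pcA κ C x a A * q_r x a)) + (fun _ : Ω => pcPol κ C π x a * q_r x a) ω) from rfl]
    rw [pexp_add, pexp_const_mul, pexp_sub, pexp_const, pexp_const, hfact]
    ring
  -- pointwise relation F = G - (t - m)
  have hFG : ∀ x A ω, F (x, A, ω) = G (x, A, ω) - (t x A - m x) := by
    intro x A ω
    simp only [hF_def, hG_def, ht_def, hm_def, hw_def]
    rw [← Finset.sum_sub_distrib, ← Finset.sum_sub_distrib]
    exact Finset.sum_congr rfl fun a _ => by ring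
  -- tower: marginal of t equals m
  have hm : ∀ x, pexp (π₀ x) (fun A => t x A) = m x := by
    intro x
    simp only [ht_def]
    rw [pexp_finset_sum]
    refine Finset.sum_congr rfl fun a _ => ?_
    rw [show (fun A => w x a * (pcA κ C x a A * q_r x a))
        = fun A => (w x a * q_r x a) * pcA κ C x a A from by funext A; ring]
    rw [pexp_const_mul]
    have : pexp (π₀ x) (fun A => pcA κ C x a A) = pcPol κ C π₀ x a := rfl
    rw [this]
    linear_combination q_r x a * hw x a
  -- means
  have hEG : pexp μ G = pexp p m := by
    rw [hμ_def, pexp_logged]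
    congr 1; funext x
    rw [show (fun A => pexp (κ x A) fun ω => G (x, A, ω)) = fun A => t x A from
      funext fun A => htG x A]
    exact hm x
  have hEF : pexp μ F = pexp p m := by
    rw [hμ_def, pexp_logged]
    congr 1; funext x
    rw [show (fun A => pexp (κ x A) fun ω => F (x, A, ω)) = fun A => m x from
      funext fun A => htF x A]
    exact pexp_const _ _
  set M : ℝ := pexp p m with hM_def
  -- variance difference equals expectation of G^2 - F^2
  have hvar : pvar μ G - pvar μ F = pexp μ (fun s => G s ^ 2 - F s ^ 2) := by
    unfold pvar
    rw [hEG, hEF, ← pexp_sub]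
    rw [show (fun s => (G s - M) ^ 2 - (F s - M) ^ 2)
        = fun s => (G s ^ 2 - F s ^ 2) - (2 * M) * (G s - F s) from
      funext fun s => by ring]
    rw [pexp_sub, pexp_const_mul, pexp_sub μ G F, hEG, hEF]
    ring
  -- compute that expectation
  have hinner : ∀ x A, pexp (κ x A) (fun ω => G (x, A, ω) ^ 2 - F (x, A, ω) ^ 2)
      = (2 * (t x A - m x)) * t x A - (t x A - m x) ^ 2 := by
    intro x A
    rw [show (fun ω => G (x, A, ω) ^ 2 - F (x, A, ω) ^ 2)
        = fun ω => (2 * (t x A - m x)) * G (x, A, ω) - (t x A - m x) ^ 2 from by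
      funext ω; rw [hFG x A ω]; ring]
    rw [show (fun ω : Ω => (2 * (t x A - m x)) * G (x, A, ω) - (t x A - m x) ^ 2)
        = fun ω : Ω => ((2 * (t x A - m x)) * G (x, A, ω)) - (fun _ : Ω => (t x A - m x) ^ 2) ω from rfl]
    rw [pexp_sub, pexp_const_mul, pexp_const, htG]
  have hfinal : pexp μ (fun s => G s ^ 2 - F s ^ 2)
      = pexp p (fun x => pexp (π₀ x) (fun A => t x A ^ 2) - m x ^ 2) := by
    rw [hμ_def, pexp_logged]
    congr 1; funext x
    rw [show (fun A => pexp (κ x A) fun ω => (fun s => G s ^ 2 - F s ^ 2) (x, A, ω))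
        = fun A => (t x A ^ 2 - m x ^ 2) from by
      funext A
      rw [show (fun ω => (fun s => G s ^ 2 - F s ^ 2) (x, A, ω))
          = fun ω => G (x, A, ω) ^ 2 - F (x, A, ω) ^ 2 from rfl, hinner]
      ring]
    rw [show (fun A : ℛ => t x A ^ 2 - m x ^ 2)
        = fun A : ℛ => t x A ^ 2 - (fun _ : ℛ => m x ^ 2) A from rfl]
    rw [pexp_sub, pexp_const]
  have hnn : 0 ≤ pexp μ (fun s => G s ^ 2 - F s ^ 2) := by
    rw [hfinal]
    refine pexp_nonneg _ fun x => ?_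
    have h1 : (pexp (π₀ x) (fun A => t x A)) ^ 2 ≤ pexp (π₀ x) (fun A => t x A ^ 2) :=
      pexp_sq_le _ _
    rw [hm x] at h1
    linarith
  linarith [hvar ▸ hnn]
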